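/- Let G = (N,A) be a loopless digraph in which every node has equal in-degree and out-degree and which has at least one arc, let P be the 0/1-circulation polytope of G, let 0 ∈ P be the zero flow and 1 ∈ P the full flow, and let c(G) be the minimum number of cycles in a partition of the arc set of G into arc-disjoint directed cycles. Then: (a) the circuit distance from 0 to 1 is at most c(G); and (b) the minimum length of a list that is simultaneously a circuit walk from 0 to 1 and a sign-compatible circuit decomposition of 1 − 0 equals c(G). -/

import Mathlib

open Matrix

/-- `g` is a circuit of the polyhedron `{x : A x = b, B x ≤ d}` with respect to the
description `(A, B)`: a nonzero element of `ker A` with coprime integral components such that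
`B g` is support-minimal among `{B x : x ∈ ker A, x ≠ 0}`. -/
def IsCircuit {mA mB n : Type*} [Fintype n]
    (A : Matrix mA n ℝ) (B : Matrix mB n ℝ) (g : n → ℝ) : Prop :=
  A.mulVec g = 0 ∧ g ≠ 0 ∧
  (∃ z : n → ℤ, (∀ i, (z i : ℝ) = g i) ∧ Finset.univ.gcd z = 1) ∧
  ∀ x : n → ℝ, A.mulVec x = 0 → x ≠ 0 →
    ¬ (Function.support (B.mulVec x) ⊂ Function.support (B.mulVec g))

/-- Membership in the polyhedron `{x : A x = b, B x ≤ d}`. -/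
def InPoly {mA mB n : Type*} [Fintype n] (A : Matrix mA n ℝ) (b : mA → ℝ)
    (B : Matrix mB n ℝ) (d : mB → ℝ) (x : n → ℝ) : Prop :=
  A.mulVec x = b ∧ B.mulVec x ≤ d

/-- `((g 0, lam 0), …, (g (r-1), lam (r-1)))` is a (maximal) circuit walk from `x` to `y`
in the polyhedron `{x : A x = b, B x ≤ d}`. -/
def IsCircuitWalk {mA mB n : Type*} [Fintype n]
    (A : Matrix mA n ℝ) (b : mA → ℝ) (B : Matrix mB n ℝ) (d : mB → ℝ)
    (x y : n → ℝ) (r : ℕ) (g : Fin r → n → ℝ) (lam : Fin r → ℝ) : Prop :=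
  (∀ i, IsCircuit A B (g i)) ∧
  (∀ i, 0 < lam i) ∧
  (∀ k : Fin r, InPoly A b B d (x + ∑ i ∈ Finset.univ.filter (fun i => i ≤ k), lam i • g i)) ∧
  (x + ∑ i, lam i • g i = y) ∧
  (∀ k : Fin r, ∀ mu : ℝ, lam k < mu →
    ¬ InPoly A b B d ((x + ∑ i ∈ Finset.univ.filter (fun i => i < k), lam i • g i) + mu • g k))

/-- `u` and `u'` are sign-compatible with respect to `B`. -/
def SignCompat {mB n : Type*} [Fintype n] (B : Matrix mB n ℝ) (u u' : n → ℝ) : Prop :=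
  ∀ i, 0 ≤ B.mulVec u i * B.mulVec u' i

/-- Sign-compatible circuit decomposition of the vector `u` with respect to `(A, B)`. -/
def IsSCDecomp {mA mB n : Type*} [Fintype n]
    (A : Matrix mA n ℝ) (B : Matrix mB n ℝ) (u : n → ℝ)
    (r : ℕ) (g : Fin r → n → ℝ) (lam : Fin r → ℝ) : Prop :=
  (∀ i, IsCircuit A B (g i)) ∧ (∀ i, 0 < lam i) ∧ (∑ i, lam i • g i = u) ∧
  ∀ i j, SignCompat B (g i) (g j)

/-- A loopless digraph with node type `N` and arc type `α`. -/
structure Digraph' (N α : Type*) where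
  src : α → N
  dst : α → N
  loopless : ∀ a, src a ≠ dst a

/-- The node-arc incidence matrix of a digraph. -/
def incMat {N α : Type*} [DecidableEq N] (G : Digraph' N α) : Matrix N α ℝ :=
  Matrix.of fun v a => if G.src a = v then 1 else if G.dst a = v then -1 else 0

/-- The inequality system `x ≤ 1`-style box constraints: rows of the identity followed by
rows of the negative identity. -/
def boxB (α : Type*) [DecidableEq α] : Matrix (α ⊕ α) α ℝ :=
  Matrix.fromRows 1 (-1)

/-- Right-hand side for the box constraints `x ≤ 1`, `-x ≤ 0` of the 0/1-circulation polytope. -/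
def boxd (α : Type*) : α ⊕ α → ℝ := Sum.elim (fun _ => 1) (fun _ => 0)

/-- In-degree of a node. -/
def inDeg {N α : Type*} [Fintype α] [DecidableEq N] (G : Digraph' N α) (v : N) : ℕ :=
  (Finset.univ.filter fun a => G.dst a = v).card

/-- Out-degree of a node. -/
def outDeg {N α : Type*} [Fintype α] [DecidableEq N] (G : Digraph' N α) (v : N) : ℕ :=
  (Finset.univ.filter fun a => G.src a = v).card

/-- `S` is the arc set of a simple dicycle of `G` (a directed cycle with no repeated nodes). -/
def IsSimpleDicycle {N α : Type*} (G : Digraph' N α) (S : Set α) : Prop :=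
  ∃ (k : ℕ) (e : Fin (k+1) → α) (v : Fin (k+1) → N),
    Function.Injective e ∧ Function.Injective v ∧ S = Set.range e ∧
    ∀ i, G.src (e i) = v i ∧ G.dst (e i) = v (i + 1)

/-- `S` is the arc set of a simple Hamiltonian dicycle of `G`. -/
def IsHamiltonianDicycle {N α : Type*} (G : Digraph' N α) (S : Set α) : Prop :=
  ∃ (k : ℕ) (e : Fin (k+1) → α) (v : Fin (k+1) → N),
    Function.Injective e ∧ Function.Bijective v ∧ S = Set.range e ∧
    ∀ i, G.src (e i) = v i ∧ G.dst (e i) = v (i + 1)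

/-- `G` decomposes into two simple Hamiltonian dicycles. -/
def DecompTwoHamiltonian {N α : Type*} (G : Digraph' N α) : Prop :=
  ∃ S₁ S₂ : Set α, IsHamiltonianDicycle G S₁ ∧ IsHamiltonianDicycle G S₂ ∧
    Disjoint S₁ S₂ ∧ S₁ ∪ S₂ = Set.univ

/-- The arc set of `G` is partitioned into `c` arc-disjoint simple directed cycles. -/
def PartitionsIntoCycles {N α : Type*} (G : Digraph' N α) (c : ℕ) : Prop :=
  ∃ S : Fin c → Set α, (∀ i, IsSimpleDicycle G (S i)) ∧
    (∀ i j, i ≠ j → Disjoint (S i) (S j)) ∧ (⋃ i, S i) = Set.univ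

/-! Nonnegative circuits of the circulation polytope are exactly the indicator vectors of simple
dicycles. Traversing the cycles of a partition one at a time with unit steps is therefore a
circuit walk from `0` to `1` that is also a sign-compatible decomposition of `1`. Conversely,
sign compatibility together with a sum equal to `1` forces every circuit of such a list to be
nonnegative, hence a dicycle indicator; inductively each step of the walk starts at a 0/1 point,
so maximality makes its length exactly one, and the cycles partition the arcs because their
indicators then sum to `1`. -/

lemma mulVec_sum_smul_eq_zero {ι m n : Type*} [Fintype n] (M : Matrix m n ℝ) {g : ι → n → ℝ}
    (hg : ∀ i, M *ᵥ g i = 0) (s : Finset ι) (c : ι → ℝ) : M *ᵥ ∑ i ∈ s, c i • g i = 0 := by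
  simp only [mulVec_sum, mulVec_smul, hg, smul_zero, Finset.sum_const_zero]

section Box

variable {α : Type*} [Fintype α] [DecidableEq α]

lemma boxB_mulVec (x : α → ℝ) : boxB α *ᵥ x = Sum.elim x (-x) := by
  rw [boxB, fromRows_mulVec, neg_mulVec, one_mulVec]

lemma boxB_mulVec_le_boxd_iff {x : α → ℝ} : boxB α *ᵥ x ≤ boxd α ↔ x ∈ Set.Icc 0 1 := by
  simp only [boxB_mulVec, boxd, Pi.le_def, Sum.forall, Sum.elim_inl, Sum.elim_inr, Pi.neg_apply,
    neg_nonpos, Set.mem_Icc, Pi.zero_apply, Pi.one_apply, and_comm]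

lemma support_boxB_mulVec_subset_iff {x y : α → ℝ} :
    Function.support (boxB α *ᵥ x) ⊆ Function.support (boxB α *ᵥ y) ↔
      Function.support x ⊆ Function.support y := by
  simp only [boxB_mulVec, Set.subset_def, Function.mem_support, Sum.forall, Sum.elim_inl,
    Sum.elim_inr, Pi.neg_apply, ne_eq, neg_eq_zero, and_self]

lemma support_boxB_mulVec_ssubset_iff {x y : α → ℝ} :
    Function.support (boxB α *ᵥ x) ⊂ Function.support (boxB α *ᵥ y) ↔
      Function.support x ⊂ Function.support y := by
  simp only [Set.ssubset_def, support_boxB_mulVec_subset_iff]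

lemma signCompat_boxB_iff {x y : α → ℝ} : SignCompat (boxB α) x y ↔ ∀ a, 0 ≤ x a * y a := by
  simp only [SignCompat, boxB_mulVec, Sum.forall, Sum.elim_inl, Sum.elim_inr, Pi.neg_apply,
    neg_mul_neg, and_self]

lemma nonneg_of_signCompat_boxB_of_sum_eq {ι : Type*} [Fintype ι] {g : ι → α → ℝ}
    {lam : ι → ℝ} (hlam : ∀ i, 0 < lam i)
    (hsign : ∀ i j, SignCompat (boxB α) (g i) (g j)) {u : α → ℝ} (hu : ∀ a, 0 < u a)
    (hsum : ∑ i, lam i • g i = u) (i : ι) : 0 ≤ g i := by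
  intro a
  by_contra! hneg
  have hall : ∀ j, lam j * g j a ≤ 0 := fun j =>
    mul_nonpos_of_nonneg_of_nonpos (hlam j).le
      (nonpos_of_mul_nonneg_right (signCompat_boxB_iff.1 (hsign i j) a) hneg)
  have := congrFun hsum a
  simp only [Finset.sum_apply, Pi.smul_apply, smul_eq_mul] at this
  exact (hu a).not_ge (this ▸ Finset.sum_nonpos fun j _ => hall j)

end Box

lemma Finset.gcd_eq_one_of_apply_eq_one {ι : Type*} {s : Finset ι} {f : ι → ℤ} {i : ι}
    (hi : i ∈ s) (hfi : f i = 1) : s.gcd f = 1 :=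
  Int.eq_one_of_dvd_one (Int.nonneg_of_normalize_eq_self Finset.normalize_gcd)
    (hfi ▸ Finset.gcd_dvd hi)

lemma Set.indicator_one_mem_Icc {α : Type*} (s : Set α) :
    s.indicator (1 : α → ℝ) ∈ Set.Icc 0 1 :=
  ⟨Set.indicator_nonneg (fun _ _ => zero_le_one), Set.indicator_le_self' fun _ _ => zero_le_one⟩

lemma Set.support_indicator_one {α : Type*} (s : Set α) :
    Function.support (s.indicator (1 : α → ℝ)) = s := by
  simp [Set.support_indicator]

lemma Function.exists_injective_cycle {T : Type*} [Finite T] [Nonempty T] (F : T → T) :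
    ∃ (k : ℕ) (c : Fin (k + 1) → T), Function.Injective c ∧ ∀ i, c (i + 1) = F (c i) := by
  obtain ⟨t⟩ := ‹Nonempty T›
  obtain ⟨m, n, hmn, hF⟩ := Set.finite_univ.exists_lt_map_eq_of_forall_mem
    (f := fun n => F^[n] t) fun _ => Set.mem_univ _
  have hper : Function.IsPeriodicPt F (n - m) (F^[m] t) := by
    rw [Function.IsPeriodicPt, Function.IsFixedPt, ← Function.iterate_add_apply,
      Nat.sub_add_cancel hmn.le]
    exact hF.symm
  set b := F^[m] t
  obtain ⟨k, hk⟩ := Nat.exists_eq_add_one_of_ne_zero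
    (hper.minimalPeriod_pos (Nat.sub_pos_of_lt hmn)).ne'
  refine ⟨k, fun i => F^[i] b, fun i j hij => Fin.ext ?_, fun i => ?_⟩
  · exact (Function.iterate_eq_iterate_iff_of_lt_minimalPeriod (hk.symm ▸ i.isLt)
      (hk.symm ▸ j.isLt)).1 hij
  · have h := Function.iterate_mod_minimalPeriod_eq (f := F) (x := b) (n := i + 1)
    rwa [hk, Function.iterate_succ_apply', ← Nat.add_mod_mod, ← Fin.val_one', ← Fin.val_add] at h

section Incidence

variable {N α : Type*} [DecidableEq N] (G : Digraph' N α)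

lemma incMat_apply (w : N) (a : α) :
    incMat G w a = (if G.src a = w then 1 else 0) - (if G.dst a = w then 1 else 0) := by
  have := G.loopless a
  simp only [incMat, of_apply]
  split_ifs <;> simp_all

variable [Fintype α]

lemma incMat_mulVec_apply (x : α → ℝ) (w : N) :
    (incMat G *ᵥ x) w = ∑ a with G.src a = w, x a - ∑ a with G.dst a = w, x a := by
  simp only [mulVec, dotProduct, incMat_apply, sub_mul, ite_mul, one_mul, zero_mul,
    Finset.sum_sub_distrib, Finset.sum_ite, Finset.sum_const_zero, add_zero]

lemma exists_pos_arc_from_dst_of_pos {g : α → ℝ} (hg0 : incMat G *ᵥ g = 0) (hg : 0 ≤ g) {a : α}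
    (ha : 0 < g a) : ∃ b, 0 < g b ∧ G.src b = G.dst a := by
  have hbal := congrFun hg0 (G.dst a)
  rw [incMat_mulVec_apply, Pi.zero_apply, sub_eq_zero] at hbal
  have hin : g a ≤ ∑ b with G.dst b = G.dst a, g b :=
    Finset.single_le_sum (fun b _ => hg b) (by simp)
  obtain ⟨b, hb, hgb⟩ := Finset.exists_lt_of_sum_lt (f := 0) (g := g)
    (s := {b | G.src b = G.dst a}) (by simpa [hbal] using ha.trans_le hin)
  exact ⟨b, hgb, (Finset.mem_filter.1 hb).2⟩

lemma incMat_mulVec_apply_of_support_subset_range {k : ℕ} {e : Fin (k + 1) → α}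
    {v : Fin (k + 1) → N} (he : Function.Injective e)
    (hev : ∀ i, G.src (e i) = v i ∧ G.dst (e i) = v (i + 1)) {x : α → ℝ}
    (hx : Function.support x ⊆ Set.range e) (w : N) :
    (incMat G *ᵥ x) w =
      ∑ i, ((if v i = w then 1 else 0) - (if v (i + 1) = w then 1 else 0)) * x (e i) := by
  simp only [mulVec, dotProduct]
  refine (Fintype.sum_of_injective e he _ _ (fun a ha => ?_) (fun i => ?_)).symm
  · rw [Function.notMem_support.1 (fun h => ha (hx h)), mul_zero]
  · rw [incMat_apply, (hev i).1, (hev i).2]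

end Incidence

namespace IsSimpleDicycle

variable {N α : Type*} {G : Digraph' N α} {S : Set α}

lemma nonempty (hS : IsSimpleDicycle G S) : S.Nonempty := by
  obtain ⟨k, e, -, -, -, rfl, -⟩ := hS
  exact Set.range_nonempty e

variable [Fintype α] [DecidableEq N]

lemma incMat_mulVec_indicator (hS : IsSimpleDicycle G S) : incMat G *ᵥ S.indicator 1 = 0 := by
  obtain ⟨k, e, v, he, -, rfl, hev⟩ := hS
  ext w
  rw [incMat_mulVec_apply_of_support_subset_range G he hev Set.support_indicator_subset w]
  simp only [Set.indicator_of_mem (Set.mem_range_self _), Pi.one_apply, mul_one,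
    Finset.sum_sub_distrib, Pi.zero_apply, sub_eq_zero]
  exact (Equiv.sum_comp (Equiv.addRight 1) fun i => if v i = w then (1 : ℝ) else 0).symm

lemma apply_eq_apply_of_incMat_mulVec_eq_zero (hS : IsSimpleDicycle G S) {x : α → ℝ}
    (hx0 : incMat G *ᵥ x = 0) (hx : Function.support x ⊆ S) {a b : α} (ha : a ∈ S)
    (hb : b ∈ S) : x a = x b := by
  obtain ⟨k, e, v, he, hv, rfl, hev⟩ := hS
  have hstep : ∀ j, x (e (j + 1)) = x (e j) := by
    intro j
    have h := congrFun hx0 (v (j + 1))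
    rw [incMat_mulVec_apply_of_support_subset_range G he hev hx] at h
    simpa only [hv.eq_iff, add_left_inj, sub_mul, ite_mul, one_mul, zero_mul,
      Finset.sum_sub_distrib, Finset.sum_ite_eq', Finset.mem_univ, if_true, Pi.zero_apply,
      sub_eq_zero] using h
  have hconst : ∀ j, x (e j) = x (e 0) := by
    intro j
    induction j using Fin.induction with
    | zero => rfl
    | succ j ih => rw [← Fin.coeSucc_eq_succ, hstep, ih]
  obtain ⟨i, rfl⟩ := ha
  obtain ⟨j, rfl⟩ := hb
  rw [hconst i, hconst j]

variable [DecidableEq α]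

lemma isCircuit (hS : IsSimpleDicycle G S) : IsCircuit (incMat G) (boxB α) (S.indicator 1) := by
  obtain ⟨a₀, ha₀⟩ := hS.nonempty
  refine ⟨hS.incMat_mulVec_indicator, fun h => ?_, ⟨S.indicator 1, fun a => ?_,
    Finset.gcd_eq_one_of_apply_eq_one (Finset.mem_univ a₀) (Set.indicator_of_mem ha₀ _)⟩,
    fun x hx0 hx hss => hx ?_⟩
  · simpa [Set.indicator_of_mem ha₀] using congrFun h a₀
  · by_cases ha : a ∈ S <;> simp [ha]
  · rw [support_boxB_mulVec_ssubset_iff, Set.support_indicator_one] at hss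
    obtain ⟨a, haS, hxa⟩ := Set.exists_of_ssubset hss
    ext b
    by_cases hb : b ∈ S
    · rw [hS.apply_eq_apply_of_incMat_mulVec_eq_zero hx0 hss.subset hb haS]
      exact Function.notMem_support.1 hxa
    · exact Function.notMem_support.1 fun h => hb (hss.subset h)

end IsSimpleDicycle

section Circuits

variable {N α : Type*} [Fintype α] [DecidableEq N] {G : Digraph' N α}

lemma exists_isSimpleDicycle_subset_support {g : α → ℝ} (hg0 : incMat G *ᵥ g = 0)
    (hg : 0 ≤ g) (hne : g ≠ 0) : ∃ S, IsSimpleDicycle G S ∧ S ⊆ Function.support g := by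
  obtain ⟨a₀, ha₀⟩ : ∃ a, 0 < g a := by
    by_contra! h
    exact hne (funext fun a => (h a).antisymm (hg a))
  let T := {a // 0 < g a}
  have : Nonempty T := ⟨⟨a₀, ha₀⟩⟩
  -- Choosing the next arc as a function of the current head node makes distinct arcs of a
  -- cycle of `F` have distinct tails.
  let σ : N → T := fun w => Classical.epsilon fun b : T => G.src b = w
  let F : T → T := fun a => σ (G.dst a)
  have hF : ∀ a, G.src (F a).1 = G.dst a.1 := fun a =>
    Classical.epsilon_spec (p := fun b : T => G.src b = G.dst a) <| by
      obtain ⟨b, hb, hsrc⟩ := exists_pos_arc_from_dst_of_pos G hg0 hg a.2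
      exact ⟨⟨b, hb⟩, hsrc⟩
  obtain ⟨k, c, hc, hcF⟩ := Function.exists_injective_cycle F
  have hcσ : ∀ i, c i = σ (G.src (c i)) := fun i => by
    rw [← sub_add_cancel i 1, hcF, hF]
  refine ⟨Set.range fun i => (c i).1, ⟨k, fun i => (c i).1, fun i => G.src (c i),
    Subtype.val_injective.comp hc, fun i j hij => hc ?_, rfl, fun i => ⟨rfl, ?_⟩⟩, ?_⟩
  · rw [hcσ i, hcσ j]
    exact congrArg σ hij
  · change G.dst (c i).1 = G.src (c (i + 1)).1
    rw [hcF, hF]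
  · rintro _ ⟨i, rfl⟩
    exact (c i).2.ne'

lemma IsCircuit.exists_eq_indicator_of_nonneg [DecidableEq α] {g : α → ℝ}
    (hg : IsCircuit (incMat G) (boxB α) g) (hpos : 0 ≤ g) :
    ∃ S, IsSimpleDicycle G S ∧ g = S.indicator 1 := by
  obtain ⟨hg0, hne, ⟨z, hz, hgcd⟩, hmin⟩ := hg
  obtain ⟨S, hS, hSg⟩ := exists_isSimpleDicycle_subset_support hg0 hpos hne
  have hsupp : Function.support g = S := by
    refine (hSg.eq_of_not_ssubset ?_).symm
    simpa only [support_boxB_mulVec_ssubset_iff, Set.support_indicator_one] using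
      hmin _ hS.incMat_mulVec_indicator hS.isCircuit.2.1
  have hoff : ∀ a ∉ S, g a = 0 := fun a ha => Function.notMem_support.1 (by rwa [hsupp])
  obtain ⟨a₀, ha₀⟩ := hS.nonempty
  have hconst : ∀ a ∈ S, g a = g a₀ := fun a ha =>
    hS.apply_eq_apply_of_incMat_mulVec_eq_zero hg0 hsupp.subset ha ha₀
  have hz₀ : z a₀ = 1 := by
    have hpos₀ : (0 : ℝ) < z a₀ := hz a₀ ▸ (hpos a₀).lt_of_ne' (hSg ha₀)
    refine Int.eq_one_of_dvd_one (by exact_mod_cast hpos₀.le) (hgcd ▸ Finset.dvd_gcd fun a _ => ?_)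
    by_cases ha : a ∈ S
    · rw [show z a = z a₀ by exact_mod_cast (hz a).trans ((hconst a ha).trans (hz a₀).symm)]
    · rw [show z a = 0 by exact_mod_cast (hz a).trans (hoff a ha)]
      exact dvd_zero _
  refine ⟨S, hS, funext fun a => ?_⟩
  by_cases ha : a ∈ S
  · rw [Set.indicator_of_mem ha, hconst a ha, ← hz a₀, hz₀, Int.cast_one, Pi.one_apply]
  · rw [Set.indicator_of_notMem ha, hoff a ha]

end Circuits

section UnitBox

variable {α : Type*}

lemma sum_indicator_one_eq_one_iff {ι : Type*} [Fintype ι] {S : ι → Set α} :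
    ∑ i, (S i).indicator (1 : α → ℝ) = 1 ↔
      (∀ i j, i ≠ j → Disjoint (S i) (S j)) ∧ ⋃ i, S i = Set.univ := by
  constructor
  · intro h
    have h' : ∀ a, ∑ i, (S i).indicator (1 : α → ℝ) a = 1 := fun a => by
      simpa only [Finset.sum_apply, Pi.one_apply] using congrFun h a
    refine ⟨fun i j hij => Set.disjoint_left.2 fun a hi hj => ?_,
      Set.eq_univ_of_forall fun a => ?_⟩
    · have := Finset.add_le_sum (f := fun i => (S i).indicator (1 : α → ℝ) a)
        (fun k _ => (Set.indicator_one_mem_Icc (S k)).1 a) (Finset.mem_univ i)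
        (Finset.mem_univ j) hij
      simp only [Set.indicator_of_mem hi, Set.indicator_of_mem hj, Pi.one_apply, h'] at this
      norm_num at this
    · by_contra ha
      simp only [Set.mem_iUnion, not_exists] at ha
      simpa [Set.indicator_of_notMem (ha _)] using h' a
  · rintro ⟨hdisj, hcover⟩
    have := Finset.indicator_biUnion Finset.univ S (f := (1 : α → ℝ))
      fun i _ j _ hij => hdisj i j hij
    simp only [Finset.mem_univ, Set.iUnion_true, hcover, Set.indicator_univ] at this
    ext a
    rw [Finset.sum_apply]
    exact (congrFun this a).symm

lemma eq_one_and_disjoint_of_maximal_step {D C : Set α} (hC : C.Nonempty) {t : ℝ} (ht : 0 < t)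
    (hfeas : D.indicator 1 + t • C.indicator 1 ∈ Set.Icc (0 : α → ℝ) 1)
    (hmax : ∀ μ, t < μ → D.indicator 1 + μ • C.indicator 1 ∉ Set.Icc (0 : α → ℝ) 1) :
    t = 1 ∧ Disjoint D C := by
  have hdisj : Disjoint D C := Set.disjoint_left.2 fun a hD hC' => by
    have := hfeas.2 a
    simp only [Pi.add_apply, Pi.smul_apply, Set.indicator_of_mem hD, Set.indicator_of_mem hC',
      Pi.one_apply, smul_eq_mul, mul_one] at this
    linarith
  obtain ⟨a, ha⟩ := hC
  have hle : t ≤ 1 := by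
    simpa [Set.indicator_of_mem ha, Set.indicator_of_notMem (Set.disjoint_right.1 hdisj ha)]
      using hfeas.2 a
  refine ⟨hle.antisymm (not_lt.1 fun hlt => hmax 1 hlt ?_), hdisj⟩
  convert Set.indicator_one_mem_Icc (D ∪ C) using 1
  rw [one_smul, Set.indicator_union_of_disjoint hdisj]
  rfl

lemma steps_eq_one_of_maximal_indicator_walk {r : ℕ} {C : Fin r → Set α}
    (hC : ∀ i, (C i).Nonempty) {lam : Fin r → ℝ} (hlam : ∀ i, 0 < lam i)
    (hfeas : ∀ k, ∑ i ∈ Finset.univ.filter (fun i => i ≤ k), lam i • (C i).indicator 1 ∈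
      Set.Icc (0 : α → ℝ) 1)
    (hmax : ∀ k μ, lam k < μ → ∑ i ∈ Finset.univ.filter (fun i => i < k),
      lam i • (C i).indicator 1 + μ • (C k).indicator 1 ∉ Set.Icc (0 : α → ℝ) 1) :
    ∀ k, lam k = 1 := by
  let P : ℕ → α → ℝ := fun m =>
    ∑ i ∈ Finset.univ.filter (fun i : Fin r => (i : ℕ) < m), lam i • (C i).indicator 1
  have hP_lt : ∀ k : Fin r, ∑ i ∈ Finset.univ.filter (fun i => i < k),
      lam i • (C i).indicator 1 = P k := fun k => by
    simp only [P, Fin.lt_def]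
  have hP_le : ∀ k : Fin r, ∑ i ∈ Finset.univ.filter (fun i => i ≤ k),
      lam i • (C i).indicator 1 = P (k + 1) := fun k => by
    simp only [P, Fin.le_def, Nat.lt_succ_iff]
  have hP_succ : ∀ k : Fin r, P (k + 1) = P k + lam k • (C k).indicator 1 := fun k => by
    rw [← hP_lt, ← hP_le, add_comm,
      ← Finset.sum_insert (f := fun i => lam i • (C i).indicator (1 : α → ℝ)) (by simp)]
    congr 1
    ext i
    simp [le_iff_lt_or_eq, or_comm]
  have hstep : ∀ k : Fin r, ∀ D : Set α, P k = D.indicator 1 → lam k = 1 ∧ Disjoint D (C k) :=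
    fun k D hD => eq_one_and_disjoint_of_maximal_step (hC k) (hlam k)
      (hD ▸ hP_succ k ▸ hP_le k ▸ hfeas k) fun μ hμ => hD ▸ hP_lt k ▸ hmax k μ hμ
  have hP : ∀ m ≤ r, ∃ D : Set α, P m = D.indicator 1 := by
    intro m
    induction m with
    | zero => exact fun _ => ⟨∅, by simp [P]; rfl⟩
    | succ m ih =>
      intro hm
      obtain ⟨D, hD⟩ := ih (Nat.le_of_succ_le hm)
      obtain ⟨h1, hdisj⟩ := hstep ⟨m, hm⟩ D hD
      refine ⟨D ∪ C ⟨m, hm⟩, ?_⟩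
      rw [hP_succ ⟨m, hm⟩, h1, one_smul, Set.indicator_union_of_disjoint hdisj, hD]
      rfl
  intro k
  obtain ⟨D, hD⟩ := hP k k.isLt.le
  exact (hstep k D hD).1

end UnitBox

section CirculationPolytope

variable {N α : Type*} [Fintype α] [DecidableEq N] [DecidableEq α] {G : Digraph' N α}

lemma inPoly_circulation_iff {x : α → ℝ} :
    InPoly (incMat G) 0 (boxB α) (boxd α) x ↔ incMat G *ᵥ x = 0 ∧ x ∈ Set.Icc 0 1 :=
  Iff.rfl.and boxB_mulVec_le_boxd_iff

lemma PartitionsIntoCycles.exists_isCircuitWalk_isSCDecomp {c : ℕ}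
    (h : PartitionsIntoCycles G c) : ∃ (g : Fin c → α → ℝ) (lam : Fin c → ℝ),
      IsCircuitWalk (incMat G) 0 (boxB α) (boxd α) 0 1 c g lam ∧
      IsSCDecomp (incMat G) (boxB α) (1 - 0) c g lam := by
  obtain ⟨S, hS, hdisj, hcover⟩ := h
  have hcirc : ∀ i, IsCircuit (incMat G) (boxB α) ((S i).indicator 1) := fun i => (hS i).isCircuit
  have hpartial : ∀ s : Finset (Fin c),
      ∑ i ∈ s, (1 : ℝ) • (S i).indicator 1 = (⋃ i ∈ s, S i).indicator (1 : α → ℝ) := fun s => by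
    rw [Finset.indicator_biUnion s S fun i _ j _ hij => hdisj i j hij]
    ext a
    simp only [one_smul, Finset.sum_apply]
  have htotal : ∑ i, (1 : ℝ) • (S i).indicator (1 : α → ℝ) = 1 := by
    simpa only [one_smul] using sum_indicator_one_eq_one_iff.2 ⟨hdisj, hcover⟩
  refine ⟨fun i => (S i).indicator 1, fun _ => 1, ⟨hcirc, fun _ => one_pos, fun k => ?_, ?_,
    fun k μ hμ hμP => ?_⟩, hcirc, fun _ => one_pos, by rwa [sub_zero], fun i j => ?_⟩
  · rw [inPoly_circulation_iff, zero_add, hpartial]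
    exact ⟨hpartial _ ▸ mulVec_sum_smul_eq_zero _ (fun i => (hcirc i).1) _ _,
      Set.indicator_one_mem_Icc _⟩
  · rw [zero_add, htotal]
  · obtain ⟨a, ha⟩ := (hS k).nonempty
    have hle := (inPoly_circulation_iff.1 hμP).2.2 a
    rw [zero_add, hpartial] at hle
    simp only [Pi.add_apply, Pi.smul_apply, Set.indicator_of_mem ha, Pi.one_apply, smul_eq_mul,
      mul_one] at hle
    exact hle.not_gt (lt_add_of_nonneg_of_lt ((Set.indicator_one_mem_Icc _).1 a) hμ)
  · exact signCompat_boxB_iff.2 fun a =>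
      mul_nonneg ((Set.indicator_one_mem_Icc _).1 a) ((Set.indicator_one_mem_Icc _).1 a)

lemma partitionsIntoCycles_of_isCircuitWalk_of_isSCDecomp {r : ℕ} {g : Fin r → α → ℝ}
    {lam : Fin r → ℝ} (hw : IsCircuitWalk (incMat G) 0 (boxB α) (boxd α) 0 1 r g lam)
    (hd : IsSCDecomp (incMat G) (boxB α) (1 - 0) r g lam) : PartitionsIntoCycles G r := by
  obtain ⟨hcirc, hlam, hfeas, -, hmax⟩ := hw
  obtain ⟨-, -, hsum, hsign⟩ := hd
  have hnonneg := nonneg_of_signCompat_boxB_of_sum_eq hlam hsign (by simp) hsum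
  choose C hC hgC using fun i => (hcirc i).exists_eq_indicator_of_nonneg (hnonneg i)
  obtain rfl : g = fun i => (C i).indicator 1 := funext hgC
  have hlam1 := steps_eq_one_of_maximal_indicator_walk (fun i => (hC i).nonempty) hlam
    (fun k => by simpa only [zero_add] using (inPoly_circulation_iff.1 (hfeas k)).2)
    fun k μ hμ hμP => hmax k μ hμ <| inPoly_circulation_iff.2
      ⟨by rw [mulVec_add, mulVec_smul, (hcirc k).1, smul_zero, add_zero, zero_add]
          exact mulVec_sum_smul_eq_zero _ (fun i => (hcirc i).1) _ _, by rwa [zero_add]⟩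
  exact ⟨C, hC, sum_indicator_one_eq_one_iff.1 (by simpa [hlam1] using hsum)⟩

end CirculationPolytope

theorem circuit_distance_and_scm_distance_vs_cycle_decomposition_general
    {N α : Type*} [Fintype α] [DecidableEq N] [DecidableEq α]
    (G : Digraph' N α)
    (cG : ℕ) (hc : IsLeast {c : ℕ | PartitionsIntoCycles G c} cG) :
    (∃ (r : ℕ) (g : Fin r → α → ℝ) (lam : Fin r → ℝ),
        IsCircuitWalk (incMat G) 0 (boxB α) (boxd α) (0 : α → ℝ) (1 : α → ℝ) r g lam ∧
        r ≤ cG) ∧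
    IsLeast {r : ℕ | ∃ (g : Fin r → α → ℝ) (lam : Fin r → ℝ),
        IsCircuitWalk (incMat G) 0 (boxB α) (boxd α) (0 : α → ℝ) (1 : α → ℝ) r g lam ∧
        IsSCDecomp (incMat G) (boxB α) ((1 : α → ℝ) - (0 : α → ℝ)) r g lam} cG := by
  obtain ⟨hpart, hmin⟩ := hc
  obtain ⟨g, lam, hwalk, hdecomp⟩ := hpart.exists_isCircuitWalk_isSCDecomp
  exact ⟨⟨cG, g, lam, hwalk, le_rfl⟩, ⟨g, lam, hwalk, hdecomp⟩,
    fun r ⟨_, _, hw, hd⟩ => hmin (partitionsIntoCycles_of_isCircuitWalk_of_isSCDecomp hw hd)⟩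

/-- Let `G` be a loopless Eulerian digraph with at least one arc and let
`c(G)` be the minimum number of cycles in a partition of the arc set of `G` into arc-disjoint
directed cycles.  Then: (a) the circuit distance from the zero flow to the full flow of the
0/1-circulation polytope of `G` is at most `c(G)`; (b) the minimum length of a list that is
simultaneously a circuit walk from `0` to `1` and a sign-compatible circuit decomposition of
`1 − 0` equals `c(G)`. -/
theorem circuit_distance_and_scm_distance_vs_cycle_decomposition
    {N α : Type*} [Fintype N] [Fintype α] [DecidableEq N] [DecidableEq α] [Nonempty α]
    (G : Digraph' N α)
    (heul : ∀ v : N, inDeg G v = outDeg G v)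
    (cG : ℕ) (hc : IsLeast {c : ℕ | PartitionsIntoCycles G c} cG) :
    (∃ (r : ℕ) (g : Fin r → α → ℝ) (lam : Fin r → ℝ),
        IsCircuitWalk (incMat G) 0 (boxB α) (boxd α) (0 : α → ℝ) (1 : α → ℝ) r g lam ∧
        r ≤ cG) ∧
    IsLeast {r : ℕ | ∃ (g : Fin r → α → ℝ) (lam : Fin r → ℝ),
        IsCircuitWalk (incMat G) 0 (boxB α) (boxd α) (0 : α → ℝ) (1 : α → ℝ) r g lam ∧
        IsSCDecomp (incMat G) (boxB α) ((1 : α → ℝ) - (0 : α → ℝ)) r g lam} cG :=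
  circuit_distance_and_scm_distance_vs_cycle_decomposition_general G cG hc
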